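/- Let E be a Hermite–Biehler function, k a positive integer, and α real, and define Φ_α(f) = ‖(z−α)^k f‖²_{H(E)}/‖f‖²_{H(E)} for 0 ≠ f ∈ X_k = {f ∈ H(E) : z^k f ∈ H(E)}. Assume X_k ≠ {0} and that for every α an extremizer attaining EP(E,k,α) = inf Φ_α exists. Then the function α ↦ EP(E,k,α) is continuous on ℝ. -/

import Mathlib

open MeasureTheory Complex

noncomputable def Estar (E : ℂ → ℂ) (z : ℂ) : ℂ :=
  (starRingEnd ℂ) (E ((starRingEnd ℂ) z))

/-- Hermite–Biehler: `|E*(z)| < |E(z)|` in the open upper half-plane. -/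
def HermiteBiehler (E : ℂ → ℂ) : Prop :=
  ∀ z : ℂ, 0 < z.im → ‖Estar E z‖ < ‖E z‖

/-- A function analytic in the upper half-plane is of bounded type if it is a quotient of
two bounded analytic functions there. -/
def BoundedTypeUHP (F : ℂ → ℂ) : Prop :=
  ∃ g h : ℂ → ℂ,
    DifferentiableOn ℂ g {z : ℂ | 0 < z.im} ∧ DifferentiableOn ℂ h {z : ℂ | 0 < z.im} ∧
    (∃ C : ℝ, ∀ z ∈ {z : ℂ | 0 < z.im}, ‖g z‖ ≤ C) ∧
    (∃ C : ℝ, ∀ z ∈ {z : ℂ | 0 < z.im}, ‖h z‖ ≤ C) ∧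
    ∀ z ∈ {z : ℂ | 0 < z.im}, h z ≠ 0 ∧ F z = g z / h z

/-- The mean type `limsup_{y→∞} log|F(iy)|/y` is nonpositive. -/
def MeanTypeNonpos (F : ℂ → ℂ) : Prop :=
  Filter.limsup (fun y : ℝ => Real.log ‖F (Complex.I * y)‖ / y) Filter.atTop ≤ 0

/-- Membership in the de Branges space `H(E)`. -/
def DeBrangesMem (E f : ℂ → ℂ) : Prop :=
  Differentiable ℂ f ∧
  Integrable (fun x : ℝ => ‖f x / E x‖ ^ 2) ∧
  BoundedTypeUHP (fun z => f z / E z) ∧ MeanTypeNonpos (fun z => f z / E z) ∧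
  BoundedTypeUHP (fun z => Estar f z / E z) ∧ MeanTypeNonpos (fun z => Estar f z / E z)

/-- `X_k = {f ∈ H(E) : z^k f ∈ H(E)}`. -/
def MemXk (E : ℂ → ℂ) (k : ℕ) (f : ℂ → ℂ) : Prop :=
  DeBrangesMem E f ∧ DeBrangesMem E (fun z => z ^ k * f z)

/-- The Rayleigh quotient `Φ_α(f) = ‖(z−α)^k f‖²/‖f‖²` in `H(E)`. -/
noncomputable def Phi (E : ℂ → ℂ) (k : ℕ) (α : ℝ) (f : ℂ → ℂ) : ℝ :=
  (∫ x : ℝ, ‖((x : ℂ) - α) ^ k * f x / E x‖ ^ 2) / (∫ x : ℝ, ‖f x / E x‖ ^ 2)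

/-- The extremal quantity `EP(E,k,α)`. -/
noncomputable def EP (E : ℂ → ℂ) (k : ℕ) (α : ℝ) : ℝ :=
  sInf {r : ℝ | ∃ f : ℂ → ℂ, MemXk E k f ∧ f ≠ 0 ∧ r = Phi E k α f}

/-! For `δ = |α - β| ≤ 1` and `a ≥ 0`, convexity of `t ↦ t ^ n` on `[0, ∞)` gives
`((1 - δ) * (a + δ)) ^ n ≤ (1 - δ) * a ^ n + δ ≤ a ^ n + δ`. Applied with `a = |x - β|`,
`|x - α| ≤ a + δ`, and integrated against `|f / E|²`, this yields
`(1 - δ) ^ (2k) * Φ_α(f) ≤ Φ_β(f) + δ` for every `f ∈ X_k`. Testing `EP(α)` on an extremizer for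
`β` gives `(1 - δ) ^ (2k) * EP(α) ≤ EP(β) + δ` for all `α, β`, and this estimate, used in both
directions, squeezes `EP(α)` to `EP(β)` as `α → β`. -/

lemma one_sub_mul_add_pow_le {a δ : ℝ} (ha : 0 ≤ a) (hδ₀ : 0 ≤ δ) (hδ₁ : δ ≤ 1) (n : ℕ) :
    ((1 - δ) * (a + δ)) ^ n ≤ a ^ n + δ := by
  have hconv := (convexOn_pow n).2 (Set.mem_Ici.2 ha) (Set.mem_Ici.2 zero_le_one)
    (sub_nonneg.2 hδ₁) hδ₀ (sub_add_cancel 1 δ)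
  simp only [smul_eq_mul, one_pow, mul_one] at hconv
  calc ((1 - δ) * (a + δ)) ^ n ≤ ((1 - δ) * a + δ) ^ n :=
        pow_le_pow_left₀ (by nlinarith) (by nlinarith) n
    _ ≤ (1 - δ) * a ^ n + δ := hconv
    _ ≤ a ^ n + δ := by nlinarith [pow_nonneg ha n]

section Moments

variable {g : ℝ → ℝ} {n : ℕ}

lemma integrable_abs_sub_pow_mul (hg : Integrable g) (hgn : Integrable fun x => |x| ^ n * g x)
    (β : ℝ) : Integrable fun x => |x - β| ^ n * g x := by
  refine Integrable.mono' ((hgn.norm.add (hg.norm.const_mul (|β| ^ n))).const_mul (2 ^ (n - 1)))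
    ((by fun_prop : Continuous fun x : ℝ => |x - β| ^ n).aestronglyMeasurable.mul
      hg.aestronglyMeasurable) (Filter.Eventually.of_forall fun x => ?_)
  have hpow : |x - β| ^ n ≤ 2 ^ (n - 1) * (|x| ^ n + |β| ^ n) :=
    (pow_le_pow_left₀ (abs_nonneg _) (abs_sub _ _) n).trans
      (add_pow_le (abs_nonneg _) (abs_nonneg _) n)
  simp only [Pi.add_apply, norm_mul, norm_pow, Real.norm_eq_abs, abs_abs]
  nlinarith [abs_nonneg (g x)]

lemma one_sub_pow_mul_integral_le (hg₀ : 0 ≤ g) (hg : Integrable g)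
    (hgn : Integrable fun x => |x| ^ n * g x) {α β : ℝ} (hαβ : |α - β| ≤ 1) :
    (1 - |α - β|) ^ n * ∫ x, |x - α| ^ n * g x
      ≤ (∫ x, |x - β| ^ n * g x) + |α - β| * ∫ x, g x := by
  set δ := |α - β|
  rw [← integral_const_mul, ← integral_const_mul, ← integral_add
    (integrable_abs_sub_pow_mul hg hgn β) (hg.const_mul δ)]
  refine integral_mono ((integrable_abs_sub_pow_mul hg hgn α).const_mul _)
    ((integrable_abs_sub_pow_mul hg hgn β).add (hg.const_mul δ)) fun x => ?_
  have hdist : |x - α| ≤ |x - β| + δ := (abs_sub_le x β α).trans_eq (by rw [abs_sub_comm β α])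
  have hpow : (1 - δ) ^ n * |x - α| ^ n ≤ |x - β| ^ n + δ :=
    calc (1 - δ) ^ n * |x - α| ^ n = ((1 - δ) * |x - α|) ^ n := (mul_pow _ _ _).symm
      _ ≤ ((1 - δ) * (|x - β| + δ)) ^ n := by gcongr
      _ ≤ |x - β| ^ n + δ := one_sub_mul_add_pow_le (abs_nonneg _) (abs_nonneg _) hαβ n
  calc (1 - δ) ^ n * (|x - α| ^ n * g x) = ((1 - δ) ^ n * |x - α| ^ n) * g x := by ring
    _ ≤ (|x - β| ^ n + δ) * g x := mul_le_mul_of_nonneg_right hpow (hg₀ x)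
    _ = |x - β| ^ n * g x + δ * g x := add_mul _ _ _

end Moments

lemma norm_ofReal_pow_mul_div_sq (c : ℝ) (k : ℕ) (a b : ℂ) :
    ‖(c : ℂ) ^ k * a / b‖ ^ 2 = |c| ^ (2 * k) * ‖a / b‖ ^ 2 := by
  rw [mul_div_assoc, norm_mul, norm_pow, Complex.norm_real, Real.norm_eq_abs, mul_pow,
    ← pow_mul, mul_comm k 2]

section RayleighQuotient

variable {E f : ℂ → ℂ} {k : ℕ}

lemma Phi_eq_integral_abs_sub_pow (α : ℝ) :
    Phi E k α f = (∫ x : ℝ, |x - α| ^ (2 * k) * ‖f x / E x‖ ^ 2) / ∫ x : ℝ, ‖f x / E x‖ ^ 2 := by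
  simp only [Phi, ← Complex.ofReal_sub, norm_ofReal_pow_mul_div_sq]

lemma Phi_nonneg (α : ℝ) : 0 ≤ Phi E k α f :=
  div_nonneg (integral_nonneg fun _ => by positivity) (integral_nonneg fun _ => by positivity)

lemma one_sub_pow_mul_Phi_le (hf : MemXk E k f) {α β : ℝ} (hαβ : |α - β| ≤ 1) :
    (1 - |α - β|) ^ (2 * k) * Phi E k α f ≤ Phi E k β f + |α - β| := by
  have hg : Integrable fun x : ℝ => ‖f x / E x‖ ^ 2 := hf.1.2.1
  have hgk : Integrable fun x : ℝ => |x| ^ (2 * k) * ‖f x / E x‖ ^ 2 := by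
    simpa only [norm_ofReal_pow_mul_div_sq] using hf.2.2.1
  have key := one_sub_pow_mul_integral_le (fun x => by positivity) hg hgk hαβ
  rw [Phi_eq_integral_abs_sub_pow, Phi_eq_integral_abs_sub_pow, ← mul_div_assoc]
  rcases (integral_nonneg fun x : ℝ => by positivity : 0 ≤ ∫ x : ℝ, ‖f x / E x‖ ^ 2).eq_or_lt
    with hD | hD
  · simp only [← hD, div_zero, zero_add, abs_nonneg]
  · rwa [div_add' _ _ _ hD.ne', div_le_div_iff_of_pos_right hD]

end RayleighQuotient

lemma one_sub_pow_mul_EP_le {E f : ℂ → ℂ} {k : ℕ} {α β : ℝ} (hf : MemXk E k f) (hf₀ : f ≠ 0)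
    (hβ : Phi E k β f = EP E k β) (hαβ : |α - β| ≤ 1) :
    (1 - |α - β|) ^ (2 * k) * EP E k α ≤ EP E k β + |α - β| := by
  have hEP : EP E k α ≤ Phi E k α f :=
    csInf_le ⟨0, fun _ ⟨_, _, _, hr⟩ => hr ▸ Phi_nonneg α⟩ ⟨f, hf, hf₀, rfl⟩
  calc (1 - |α - β|) ^ (2 * k) * EP E k α ≤ (1 - |α - β|) ^ (2 * k) * Phi E k α f :=
        mul_le_mul_of_nonneg_left hEP (pow_nonneg (sub_nonneg.2 hαβ) _)
    _ ≤ EP E k β + |α - β| := hβ ▸ one_sub_pow_mul_Phi_le hf hαβ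

open Filter Topology in
lemma continuous_of_one_sub_abs_pow_mul_le {u : ℝ → ℝ} (n : ℕ)
    (hu : ∀ α β, |α - β| ≤ 1 → (1 - |α - β|) ^ n * u α ≤ u β + |α - β|) : Continuous u := by
  refine continuous_iff_continuousAt.2 fun β => ?_
  have hlower : Tendsto (fun α => (1 - |α - β|) ^ n * u β - |α - β|) (𝓝 β) (𝓝 (u β)) := by
    simpa using ((by fun_prop : Continuous fun α => (1 - |α - β|) ^ n * u β - |α - β|).tendsto β)
  have hupper : Tendsto (fun α => (u β + |α - β|) / (1 - |α - β|) ^ n) (𝓝 β) (𝓝 (u β)) := by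
    have : ContinuousAt (fun α => (u β + |α - β|) / (1 - |α - β|) ^ n) β :=
      ContinuousAt.div (by fun_prop) (by fun_prop) (by simp)
    simpa using this.tendsto
  have hnear : ∀ᶠ α in 𝓝 β, |α - β| < 1 :=
    (by fun_prop : Continuous fun α => |α - β|).continuousAt.eventually_lt continuousAt_const
      (by simp)
  refine tendsto_of_tendsto_of_tendsto_of_le_of_le' hlower hupper ?_ ?_
  · filter_upwards [hnear] with α hα
    have hβα := hu β α (by rw [abs_sub_comm]; exact hα.le)
    rw [abs_sub_comm] at hβα
    linarith
  · filter_upwards [hnear] with α hα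
    rw [le_div_iff₀ (pow_pos (sub_pos.2 hα) n), mul_comm]
    exact hu α β hα.le

theorem EP_continuous_in_alpha_general
    (E : ℂ → ℂ) (k : ℕ)
    (hext : ∀ α : ℝ, ∃ f : ℂ → ℂ, MemXk E k f ∧ f ≠ 0 ∧ Phi E k α f = EP E k α) :
    Continuous fun α : ℝ => EP E k α := by
  refine continuous_of_one_sub_abs_pow_mul_le (2 * k) fun α β hαβ => ?_
  obtain ⟨f, hf, hf₀, hβ⟩ := hext β
  exact one_sub_pow_mul_EP_le hf hf₀ hβ hαβ

theorem EP_continuous_in_alpha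
    (E : ℂ → ℂ) (hE : HermiteBiehler E) (k : ℕ) (hk : 0 < k)
    (hXk : ∃ f : ℂ → ℂ, f ≠ 0 ∧ MemXk E k f)
    (hext : ∀ α : ℝ, ∃ f : ℂ → ℂ, MemXk E k f ∧ f ≠ 0 ∧ Phi E k α f = EP E k α) :
    Continuous fun α : ℝ => EP E k α :=
  EP_continuous_in_alpha_general E k hext
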